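/- arXiv:1105.4474 — 4 statements merged into one kernel-verified Lean document; each statement's English description precedes it below -/
import Mathlib

section
/- Let $g_1,\dots,g_p$ be complex numbers and let $h = (h_{i_1\cdots i_{\ell-1}})$ be a skew-symmetric array of complex numbers with indices in $\{1,\dots,p\}$ satisfying the Koszul condition $\sum_{i=1}^p g_i h_{i i_1\cdots i_{\ell-2}} = 0$ for all $i_1,\dots,i_{\ell-2}$ (vacuous if $\ell=1$). Define $(\bar g\wedge h)_{i_1\cdots i_\ell} = -\sum_{\sigma=1}^{\ell}(-1)^{\sigma}\bar g_{i_\sigma} h_{i_1\cdots \hat i_\sigma \cdots i_\ell}$. Then $\frac{1}{\ell!}\sum_{i_1,\dots,i_\ell}|(\bar g\wedge h)_{i_1\cdots i_\ell}|^2 = \big(\sum_i |g_i|^2\big)\cdot \frac{1}{(\ell-1)!}\sum_{i_1,\dots,i_{\ell-1}}|h_{i_1\cdots i_{\ell-1}}|^2$. -/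
/-!
Write `(ḡ ∧ h)_v = ∑_σ T_σ` and expand `‖∑_σ T_σ‖²` as `∑_{σ,τ} T_σ conj T_τ`. A diagonal
term `σ = τ` sums over all `v` to `‖g‖² ‖h‖²`, since `v ↦ (v σ, v ∘ σ.succAbove)` is a
bijection. In an off-diagonal term the entry `v σ` occurs in `conj T_τ` only inside
`conj (g (v σ) h (⋯ v σ ⋯))`, so summing over it produces the conjugate of a Koszul sum, which
vanishes. Hence the total is `(m + 1) ‖g‖² ‖h‖²`, and `(m + 1) / (m + 1)! = 1 / m!`.
-/

open Finset
open scoped ComplexConjugate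

namespace Fin

variable {α : Type*} {n : ℕ}

theorem sum_univ_pi_insertNth {M : Type*} [AddCommMonoid M] [Fintype α]
    (σ : Fin (n + 1)) (f : (Fin (n + 1) → α) → M) :
    ∑ v, f v = ∑ a : α, ∑ w : Fin n → α, f (σ.insertNth a w) := by
  rw [← Fintype.sum_prod_type', ← (insertNthEquiv (fun _ => α) σ).sum_comp]
  rfl

theorem insertNth_comp_succAbove_eq_update {σ τ : Fin (n + 1)} {k : Fin n}
    (hk : τ.succAbove k = σ) (a b : α) (w : Fin n → α) :
    σ.insertNth a w ∘ τ.succAbove = Function.update (σ.insertNth b w ∘ τ.succAbove) k a := by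
  funext i
  rcases eq_or_ne i k with rfl | hik
  · simp [hk]
  · obtain ⟨l, hl⟩ : ∃ l, σ.succAbove l = τ.succAbove i :=
      exists_succAbove_eq fun h => hik (succAbove_right_injective (h.trans hk.symm))
    simp [Function.update_of_ne hik, ← hl]

end Fin

section Wedge

variable {𝕜 α : Type*} [RCLike 𝕜] [Fintype α] {n : ℕ}

/-- The `σ`-th summand of `(ḡ ∧ h)_v`; with `σ` counted from `0`, the paper's sign
`-(-1)^σ` becomes `(-1)^σ`. -/
def wedgeTerm (g : α → 𝕜) (h : (Fin n → α) → 𝕜) (v : Fin (n + 1) → α) (σ : Fin (n + 1)) : 𝕜 :=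
  (-1) ^ (σ : ℕ) * conj (g (v σ)) * h (v ∘ σ.succAbove)

theorem sum_norm_sq_wedgeTerm (g : α → 𝕜) (h : (Fin n → α) → 𝕜) (σ : Fin (n + 1)) :
    ∑ v, ‖wedgeTerm g h v σ‖ ^ 2 = (∑ a, ‖g a‖ ^ 2) * ∑ w, ‖h w‖ ^ 2 := by
  rw [Fin.sum_univ_pi_insertNth σ, sum_mul_sum]
  simp [wedgeTerm, mul_pow]

theorem sum_wedgeTerm_mul_conj_eq_zero (g : α → 𝕜) (h : (Fin n → α) → 𝕜)
    (hkoszul : ∀ (w : Fin n → α) (j : Fin n), ∑ a, g a * h (Function.update w j a) = 0)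
    {σ τ : Fin (n + 1)} (hστ : σ ≠ τ) :
    ∑ v, wedgeTerm g h v σ * conj (wedgeTerm g h v τ) = 0 := by
  obtain ⟨k, hk⟩ := Fin.exists_succAbove_eq hστ
  obtain ⟨j, hj⟩ := Fin.exists_succAbove_eq hστ.symm
  rw [Fin.sum_univ_pi_insertNth σ, sum_comm]
  refine sum_eq_zero fun w _ => ?_
  have hterm : ∀ a, wedgeTerm g h (σ.insertNth a w) σ * conj (wedgeTerm g h (σ.insertNth a w) τ)
      = (-1) ^ (σ : ℕ) * (-1) ^ (τ : ℕ) * h w * g (w j) *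
        conj (g a * h (Function.update (σ.insertNth (w j) w ∘ τ.succAbove) k a)) := by
    intro a
    have hvτ : Fin.insertNth (α := fun _ => α) σ a w τ = w j := by
      rw [← hj, Fin.insertNth_apply_succAbove]
    rw [← Fin.insertNth_comp_succAbove_eq_update hk]
    simp only [wedgeTerm, Fin.insertNth_apply_same, Fin.insertNth_comp_succAbove, hvτ,
      map_mul, map_pow, map_neg, map_one, RCLike.conj_conj]
    ring
  simp only [hterm, ← mul_sum, ← map_sum, hkoszul, map_zero, mul_zero]

theorem sum_norm_sq_sum_wedgeTerm (g : α → 𝕜) (h : (Fin n → α) → 𝕜)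
    (hkoszul : ∀ (w : Fin n → α) (j : Fin n), ∑ a, g a * h (Function.update w j a) = 0) :
    ∑ v, ‖∑ σ, wedgeTerm g h v σ‖ ^ 2 = (n + 1) * ((∑ a, ‖g a‖ ^ 2) * ∑ w, ‖h w‖ ^ 2) := by
  have hdiag : ∀ σ, ∑ v, wedgeTerm g h v σ * conj (wedgeTerm g h v σ)
      = (((∑ a, ‖g a‖ ^ 2) * ∑ w, ‖h w‖ ^ 2 : ℝ) : 𝕜) := by
    intro σ
    simp only [RCLike.mul_conj, ← sum_norm_sq_wedgeTerm g h σ]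
    push_cast
    rfl
  apply RCLike.ofReal_injective (K := 𝕜)
  calc ((∑ v, ‖∑ σ, wedgeTerm g h v σ‖ ^ 2 : ℝ) : 𝕜)
      = ∑ σ, ∑ τ, ∑ v, wedgeTerm g h v σ * conj (wedgeTerm g h v τ) := by
        push_cast
        simp only [← RCLike.mul_conj, map_sum, sum_mul_sum]
        rw [sum_comm]
        exact sum_congr rfl fun σ _ => sum_comm
    _ = ∑ σ : Fin (n + 1), (((∑ a, ‖g a‖ ^ 2) * ∑ w, ‖h w‖ ^ 2 : ℝ) : 𝕜) := by
        refine sum_congr rfl fun σ _ => ?_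
        rw [sum_eq_single σ (fun τ _ hτ => sum_wedgeTerm_mul_conj_eq_zero g h hkoszul hτ.symm)
          (by simp), hdiag]
    _ = (((n + 1) * ((∑ a, ‖g a‖ ^ 2) * ∑ w, ‖h w‖ ^ 2) : ℝ) : 𝕜) := by
        simp [card_univ]

end Wedge

theorem wedge_norm_identity_general (p m : ℕ)
    (g : Fin p → ℂ) (h : (Fin m → Fin p) → ℂ)
    (hkoszul : ∀ (w : Fin m → Fin p) (j : Fin m),
      ∑ i : Fin p, g i * h (Function.update w j i) = 0) :
    ((Nat.factorial (m + 1) : ℝ))⁻¹ *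
      ∑ v : Fin (m + 1) → Fin p,
        ‖∑ σ : Fin (m + 1),
          (-1 : ℂ) ^ (σ : ℕ) * (starRingEnd ℂ) (g (v σ)) * h (v ∘ σ.succAbove)‖ ^ 2
    = (∑ i : Fin p, ‖g i‖ ^ 2) *
        (((Nat.factorial m : ℝ))⁻¹ * ∑ w : Fin m → Fin p, ‖h w‖ ^ 2) := by
  have hsum := sum_norm_sq_sum_wedgeTerm g h hkoszul
  simp only [wedgeTerm] at hsum
  rw [hsum, Nat.factorial_succ]
  have hm : (m.factorial : ℝ) ≠ 0 := mod_cast m.factorial_ne_zero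
  push_cast
  field_simp

/-- Norm identity for the wedge with `g̅`: if `h` is a skew-symmetric array of
degree `m = ℓ - 1` satisfying the Koszul condition `ι_g h = 0`, then
`‖g̅ ∧ h‖² = ‖g‖² ‖h‖²` (with the normalized norms `1/ℓ! ∑ |·|²`). -/
theorem wedge_norm_identity (p m : ℕ) (hpm : m + 1 ≤ p)
    (g : Fin p → ℂ) (h : (Fin m → Fin p) → ℂ)
    (hskew : ∀ (w : Fin m → Fin p) (a b : Fin m), a ≠ b →
      h (w ∘ Equiv.swap a b) = - h w)
    (hkoszul : ∀ (w : Fin m → Fin p) (j : Fin m),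
      ∑ i : Fin p, g i * h (Function.update w j i) = 0) :
    ((Nat.factorial (m + 1) : ℝ))⁻¹ *
      ∑ v : Fin (m + 1) → Fin p,
        ‖∑ σ : Fin (m + 1),
          (-1 : ℂ) ^ (σ : ℕ) * (starRingEnd ℂ) (g (v σ)) * h (v ∘ σ.succAbove)‖ ^ 2
    = (∑ i : Fin p, ‖g i‖ ^ 2) *
        (((Nat.factorial m : ℝ))⁻¹ * ∑ w : Fin m → Fin p, ‖h w‖ ^ 2) :=
  wedge_norm_identity_general p m g h hkoszul
end

section
/- Let $a_i, b_{i\alpha}, c_{i_1\cdots i_\ell \alpha} \in \mathbb{C}$ for $1 \le i, i_1,\dots,i_\ell \le p$ and $1 \le \alpha \le n$, where $c$ is skew-symmetric in the indices $i_1,\dots,i_\ell$. Then for any fixed $1 \le i_1 < \cdots < i_{\ell-1} \le p$: $\big|\sum_{i,j,\alpha} \bar a_j (a_j b_{i\alpha} - a_i b_{j\alpha}) c_{i i_1\cdots i_{\ell-1}\alpha}\big|^2 \le q \big(\sum_i |a_i|^2\big) \sum_{i}\sum_{j<k} \big|\sum_\alpha (a_j b_{k\alpha} - a_k b_{j\alpha})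 c_{i i_1\cdots i_{\ell-1}\alpha}\big|^2$, where $q = \min\{p-1, n\}$ if $\ell = 1$ and $q = \min\{p-\ell+1, n\}$ if $\ell \ge 2$. -/
/-!
Put `t_α = ‖a‖² b_α - ⟪a, b_α⟫ a`, which is orthogonal to `a`, and `x_i = ∑_α c_{i i₁⋯α} t_α`.
The sum on the left is `∑_i (x_i)_i`, the trace of the matrix with columns `x_i`; since
`a_j (x_i)_k - a_k (x_i)_j = ‖a‖² ∑_α (a_j b_{kα} - a_k b_{jα}) c_{i i₁⋯α}`, Lagrange's identity
(with `x_i ⊥ a`) turns the right side into `q ∑_i ‖x_i‖²`. By Cauchy–Schwarz, a matrix whose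
columns lie in a subspace `V` has `|tr|² ≤ dim V · ∑_i ‖x_i‖²`; here `V = span {t_α}` lies in
`a^⊥` and has dimension at most `min (p - 1) n`. Skew-symmetry kills the columns `x_{i_k}`, so
at most `p - ℓ + 1` diagonal terms survive, and Cauchy–Schwarz over them gives `p - ℓ + 1`.
-/

open Complex Finset Module
open scoped InnerProductSpace ComplexConjugate

theorem eq_zero_of_apply_eq_of_comp_swap {ι X G : Type*} [DecidableEq ι] [AddGroup G]
    [IsAddTorsionFree G] {c : (ι → X) → G}
    (hskew : ∀ v s t, s ≠ t → c (v ∘ Equiv.swap s t) = -c v)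
    {v : ι → X} {s t : ι} (hst : s ≠ t) (hv : v s = v t) : c v = 0 := by
  have hswap : v ∘ Equiv.swap s t = v := by
    rw [Equiv.comp_swap_eq_update, hv, Function.update_eq_self, ← hv, Function.update_eq_self]
  exact self_eq_neg.mp (by simpa [hswap] using hskew v s t hst)

theorem apply_cons_self_eq_zero {m : ℕ} {X G : Type*} [AddGroup G] [IsAddTorsionFree G]
    {c : (Fin (m + 1) → X) → G} (hskew : ∀ v s t, s ≠ t → c (v ∘ Equiv.swap s t) = -c v)
    (w : Fin m → X) (s : Fin m) : c (Fin.cons (w s) w) = 0 :=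
  eq_zero_of_apply_eq_of_comp_swap hskew (Fin.succ_ne_zero s).symm (by simp)

theorem sum_sum_eq_two_nsmul_sum_sum_ite_lt {ι M : Type*} [Fintype ι] [LinearOrder ι]
    [AddCommMonoid M]
    (F : ι → ι → M) (hF : ∀ j k, F j k = F k j) (hdiag : ∀ j, F j j = 0) :
    ∑ j, ∑ k, F j k = 2 • ∑ j, ∑ k, if j < k then F j k else 0 := by
  have hsplit (j k : ι) : F j k = (if j < k then F j k else 0) + if k < j then F k j else 0 := by
    rcases lt_trichotomy j k with h | rfl | h
    · simp [h, h.not_gt]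
    · simp [hdiag]
    · simpa [h, h.not_gt] using hF j k
  calc ∑ j, ∑ k, F j k
      = ∑ j, ∑ k, ((if j < k then F j k else 0) + if k < j then F k j else 0) :=
        sum_congr rfl fun j _ => sum_congr rfl fun k _ => hsplit j k
    _ = _ := by
        simp_rw [sum_add_distrib, two_nsmul]
        rw [sum_comm (f := fun j k => if k < j then F k j else 0)]

section InnerProductSpace

variable {𝕜 E ι : Type*} [RCLike 𝕜] [NormedAddCommGroup E] [InnerProductSpace 𝕜 E] [Fintype ι]

theorem norm_sum_inner_sq_le_finrank_mul {e : ι → E} (he : Orthonormal 𝕜 e)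
    (V : Submodule 𝕜 E) [FiniteDimensional 𝕜 V] {x : ι → E} (hx : ∀ i, x i ∈ V) :
    ‖∑ i, ⟪e i, x i⟫_𝕜‖ ^ 2 ≤ finrank 𝕜 V * ∑ i, ‖x i‖ ^ 2 := by
  set f := stdOrthonormalBasis 𝕜 V
  have hexpand (i : ι) : ⟪e i, x i⟫_𝕜 = ∑ s, ⟪e i, (f s : E)⟫_𝕜 * ⟪(f s : E), x i⟫_𝕜 := by
    have := congrArg Subtype.val (f.sum_repr' ⟨x i, hx i⟩)
    simp only [Submodule.coe_sum, Submodule.coe_smul, Submodule.coe_inner] at this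
    conv_lhs => rw [← this]
    simp [inner_sum, inner_smul_right, mul_comm]
  have hbessel (s) : ∑ i, ‖⟪e i, (f s : E)⟫_𝕜‖ ^ 2 ≤ 1 := by
    have hnorm : ‖(f s : E)‖ = 1 := f.orthonormal.1 s
    simpa [hnorm] using he.sum_inner_products_le (s := univ) (f s : E)
  have hparseval (i : ι) : ∑ s, ‖⟪(f s : E), x i⟫_𝕜‖ ^ 2 = ‖x i‖ ^ 2 := by
    simpa using f.sum_sq_norm_inner_right ⟨x i, hx i⟩
  calc ‖∑ i, ⟪e i, x i⟫_𝕜‖ ^ 2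
      ≤ (∑ p : ι × _, ‖⟪e p.1, (f p.2 : E)⟫_𝕜‖ * ‖⟪(f p.2 : E), x p.1⟫_𝕜‖) ^ 2 := by
        simp_rw [hexpand, Fintype.sum_prod_type, ← norm_mul]
        gcongr
        exact (norm_sum_le _ _).trans (sum_le_sum fun i _ => norm_sum_le _ _)
    _ ≤ (∑ p : ι × _, ‖⟪e p.1, (f p.2 : E)⟫_𝕜‖ ^ 2) * ∑ p : ι × _, ‖⟪(f p.2 : E), x p.1⟫_𝕜‖ ^ 2 :=
        sum_mul_sq_le_sq_mul_sq _ _ _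
    _ ≤ finrank 𝕜 V * ∑ i, ‖x i‖ ^ 2 := by
        rw [Fintype.sum_prod_type, Fintype.sum_prod_type, sum_comm]
        simp_rw [hparseval]
        gcongr
        simpa using sum_le_sum (s := univ) fun s _ => hbessel s

theorem norm_sum_inner_sq_le_card_mul {e : ι → E} (he : Orthonormal 𝕜 e) (S : Finset ι)
    {x : ι → E} (hx : ∀ i ∉ S, x i = 0) :
    ‖∑ i, ⟪e i, x i⟫_𝕜‖ ^ 2 ≤ #S * ∑ i, ‖x i‖ ^ 2 := by
  have hS {f : ι → ℝ} (hf : ∀ i ∉ S, f i = 0) : ∑ i ∈ S, f i = ∑ i, f i :=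
    sum_subset (subset_univ S) fun i _ hi => hf i hi
  calc ‖∑ i, ⟪e i, x i⟫_𝕜‖ ^ 2
      ≤ (∑ i ∈ S, ‖x i‖) ^ 2 := by
        rw [hS (f := fun i => ‖x i‖) fun i hi => by simp [hx i hi]]
        gcongr
        refine (norm_sum_le _ _).trans (sum_le_sum fun i _ => ?_)
        simpa [he.1 i] using norm_inner_le_norm (𝕜 := 𝕜) (e i) (x i)
    _ ≤ #S * ∑ i ∈ S, ‖x i‖ ^ 2 := sq_sum_le_card_mul_sum_sq
    _ = #S * ∑ i, ‖x i‖ ^ 2 := by rw [hS fun i hi => by simp [hx i hi]]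

theorem norm_sum_inner_sq_le_min_mul {e : ι → E} (he : Orthonormal 𝕜 e)
    (V : Submodule 𝕜 E) [FiniteDimensional 𝕜 V] (S : Finset ι) {x : ι → E}
    (hxV : ∀ i, x i ∈ V) (hxS : ∀ i ∉ S, x i = 0) :
    ‖∑ i, ⟪e i, x i⟫_𝕜‖ ^ 2 ≤ min (finrank 𝕜 V) #S * ∑ i, ‖x i‖ ^ 2 := by
  rcases min_choice (finrank 𝕜 V) #S with h | h <;> rw [h]
  · exact norm_sum_inner_sq_le_finrank_mul he V hxV
  · exact norm_sum_inner_sq_le_card_mul he S hxS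

theorem sum_sum_ite_lt_norm_mul_sub_mul_sq [LinearOrder ι] (u v : EuclideanSpace 𝕜 ι) :
    ∑ j, ∑ k, (if j < k then ‖u j * v k - u k * v j‖ ^ 2 else 0) =
      ‖u‖ ^ 2 * ‖v‖ ^ 2 - ‖⟪u, v⟫_𝕜‖ ^ 2 := by
  have hfull : ∑ j, ∑ k, ‖u j * v k - u k * v j‖ ^ 2 =
      2 * (‖u‖ ^ 2 * ‖v‖ ^ 2 - ‖⟪u, v⟫_𝕜‖ ^ 2) := by
    apply RCLike.ofReal_injective (K := 𝕜)
    have hexpand (j k : ι) : (u j * v k - u k * v j) * conj (u j * v k - u k * v j) =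
        u j * conj (u j) * (v k * conj (v k)) + v j * conj (v j) * (u k * conj (u k))
          - v j * conj (u j) * (conj (v k) * u k) - conj (v j) * u j * (v k * conj (u k)) := by
      simp only [map_sub, map_mul]; ring
    simp only [EuclideanSpace.norm_sq_eq, PiLp.inner_apply, RCLike.inner_apply]
    push_cast
    simp_rw [← RCLike.mul_conj, map_sum, map_mul, RCLike.conj_conj, hexpand, sum_sub_distrib,
      sum_add_distrib, ← mul_sum, ← sum_mul]
    ring
  have := sum_sum_eq_two_nsmul_sum_sum_ite_lt (fun j k => ‖u j * v k - u k * v j‖ ^ 2)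
    (fun j k => by rw [norm_sub_rev, mul_comm (u j), mul_comm (u k)]) (fun j => by simp)
  rw [hfull, two_nsmul] at this
  linarith

end InnerProductSpace

namespace Skoda

variable {ι κ : Type*} [Fintype ι] (a : ι → ℂ) (b : ι → κ → ℂ)

/-- `‖a‖² b_α - ⟪a, b_α⟫ a`, written in the form in which it appears in the inequality. -/
def vec (α : κ) : EuclideanSpace ℂ ι :=
  WithLp.toLp 2 fun i => ∑ j, conj (a j) * (a j * b i α - a i * b j α)

theorem vec_apply (α : κ) (i : ι) :
    vec a b α i = ∑ j, conj (a j) * (a j * b i α - a i * b j α) := rfl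

theorem inner_vec (α : κ) : ⟪WithLp.toLp 2 a, vec a b α⟫_ℂ = 0 := by
  simp only [PiLp.inner_apply, RCLike.inner_apply, vec_apply, sum_mul]
  rw [← self_eq_neg]
  nth_rewrite 1 [sum_comm]
  rw [← sum_neg_distrib]
  refine sum_congr rfl fun i _ => ?_
  rw [← sum_neg_distrib]
  exact sum_congr rfl fun j _ => by ring

theorem mul_vec_sub_mul_vec (α : κ) (j k : ι) :
    a j * vec a b α k - a k * vec a b α j =
      ((∑ l, ‖a l‖ ^ 2 : ℝ) : ℂ) * (a j * b k α - a k * b j α) := by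
  simp only [vec_apply, mul_sum, ← sum_sub_distrib, ofReal_sum, ofReal_pow, sum_mul]
  refine sum_congr rfl fun l _ => ?_
  rw [← conj_mul']
  ring

theorem finrank_span_range_vec_lt (ha : a ≠ 0) :
    finrank ℂ (Submodule.span ℂ (Set.range (vec a b))) < Fintype.card ι := by
  rw [← finrank_euclideanSpace (𝕜 := ℂ)]
  refine Submodule.finrank_lt fun htop => ?_
  have hle : Submodule.span ℂ (Set.range (vec a b)) ≤ (ℂ ∙ WithLp.toLp 2 a)ᗮ :=
    Submodule.span_le.mpr <| Set.range_subset_iff.mpr fun α =>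
      Submodule.mem_orthogonal_singleton_iff_inner_right.mpr (inner_vec a b α)
  have hmem := hle (htop ▸ Submodule.mem_top : WithLp.toLp 2 a ∈ _)
  rw [Submodule.mem_orthogonal_singleton_iff_inner_right, inner_self_eq_zero] at hmem
  exact ha (by simpa using hmem)

variable [Fintype κ] (C : ι → κ → ℂ)

def col (i : ι) : EuclideanSpace ℂ ι := ∑ α, C i α • vec a b α

theorem col_apply (i k : ι) : col a b C i k = ∑ α, C i α * vec a b α k := by
  simp [col]

theorem inner_col (i : ι) : ⟪WithLp.toLp 2 a, col a b C i⟫_ℂ = 0 := by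
  simp [col, inner_vec]

theorem col_mem_span (i : ι) : col a b C i ∈ Submodule.span ℂ (Set.range (vec a b)) :=
  Submodule.sum_mem _ fun α _ => Submodule.smul_mem _ _ (Submodule.subset_span ⟨α, rfl⟩)

theorem sum_col_apply_self :
    ∑ i, ∑ j, ∑ α, conj (a j) * (a j * b i α - a i * b j α) * C i α = ∑ i, col a b C i i := by
  refine sum_congr rfl fun i _ => ?_
  simp only [col_apply, vec_apply, mul_sum]
  rw [sum_comm]
  exact sum_congr rfl fun α _ => sum_congr rfl fun j _ => by ring

theorem norm_col_sq [LinearOrder ι] (ha : a ≠ 0) (i : ι) :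
    (∑ l, ‖a l‖ ^ 2) * ∑ j, ∑ k,
        (if j < k then ‖∑ α, (a j * b k α - a k * b j α) * C i α‖ ^ 2 else 0) =
      ‖col a b C i‖ ^ 2 := by
  set A : ℝ := ∑ l, ‖a l‖ ^ 2
  have hnorm : ‖WithLp.toLp 2 a‖ ^ 2 = A := by simp [EuclideanSpace.norm_sq_eq, A]
  have hA : 0 < A := hnorm ▸ pow_pos (norm_pos_iff.mpr (by simpa using ha)) 2
  have hcol (j k : ι) : a j * col a b C i k - a k * col a b C i j =
      A * ∑ α, (a j * b k α - a k * b j α) * C i α := by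
    simp only [col_apply, mul_sum, ← sum_sub_distrib]
    refine sum_congr rfl fun α _ => ?_
    linear_combination C i α * mul_vec_sub_mul_vec a b α j k
  have hlagrange := sum_sum_ite_lt_norm_mul_sub_mul_sq (WithLp.toLp 2 a) (col a b C i)
  simp only [hcol, inner_col, norm_zero, hnorm, norm_mul, Complex.norm_real,
    Real.norm_of_nonneg hA.le, mul_pow, ← mul_ite_zero, ← mul_sum] at hlagrange
  refine mul_left_cancel₀ hA.ne' ?_
  linear_combination hlagrange

end Skoda

theorem generalized_skoda_inequality_general (p n m : ℕ)
    (a : Fin p → ℂ) (b : Fin p → Fin n → ℂ)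
    (c : (Fin (m + 1) → Fin p) → Fin n → ℂ)
    (hskew : ∀ (v : Fin (m + 1) → Fin p) (s t : Fin (m + 1)) (α : Fin n), s ≠ t →
      c (v ∘ Equiv.swap s t) α = - c v α)
    (w : Fin m → Fin p) (hw : StrictMono w) :
    ‖(∑ i : Fin p, ∑ j : Fin p, ∑ α : Fin n,
        (starRingEnd ℂ) (a j) * (a j * b i α - a i * b j α) * c (Fin.cons i w) α)‖ ^ 2
      ≤ ((if m = 0 then min (p - 1) n else min (p - m) n : ℕ) : ℝ) *
          (∑ i : Fin p, ‖a i‖ ^ 2) *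
          ∑ i : Fin p, ∑ j : Fin p, ∑ k : Fin p,
            (if j < k then
              ‖(∑ α : Fin n,
                (a j * b k α - a k * b j α) * c (Fin.cons i w) α)‖ ^ 2
            else 0) := by
  rcases eq_or_ne a 0 with rfl | ha
  · simp
  set q : ℕ := if m = 0 then min (p - 1) n else min (p - m) n
  set C : Fin p → Fin n → ℂ := fun i α => c (Fin.cons i w) α
  set V := Submodule.span ℂ (Set.range (Skoda.vec a b))
  set S : Finset (Fin p) := (univ.image w)ᶜ
  have hcard : #S = p - m := by simp [S, card_compl, card_image_of_injective _ hw.injective]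
  have hrank : finrank ℂ V < p ∧ finrank ℂ V ≤ n :=
    ⟨by simpa using Skoda.finrank_span_range_vec_lt a b ha,
      by simpa [Set.finrank] using finrank_range_le_card (R := ℂ) (Skoda.vec a b)⟩
  have hq : min (finrank ℂ V) #S ≤ q := by simp only [q]; split_ifs <;> omega
  have hcol_zero : ∀ i ∉ S, Skoda.col a b C i = 0 := by
    intro i hi
    obtain ⟨s, -, rfl⟩ := mem_image.mp (notMem_compl.mp hi)
    simp [Skoda.col, C, apply_cons_self_eq_zero (c := (c · _)) (fun v s t hst => hskew v s t _ hst)]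
  rw [Skoda.sum_col_apply_self a b C, mul_assoc, mul_sum _ _ (∑ i, ‖a i‖ ^ 2)]
  calc ‖∑ i, Skoda.col a b C i i‖ ^ 2
      = ‖∑ i, ⟪EuclideanSpace.basisFun (Fin p) ℂ i, Skoda.col a b C i⟫_ℂ‖ ^ 2 := by
        simp_rw [EuclideanSpace.basisFun_inner]
    _ ≤ min (finrank ℂ V) #S * ∑ i, ‖Skoda.col a b C i‖ ^ 2 :=
        norm_sum_inner_sq_le_min_mul (EuclideanSpace.basisFun _ ℂ).orthonormal V S
          (Skoda.col_mem_span a b C) hcol_zero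
    _ ≤ q * ∑ i, ‖Skoda.col a b C i‖ ^ 2 := by gcongr
    _ = _ := congrArg _ (sum_congr rfl fun i _ => (Skoda.norm_col_sq a b C ha i).symm)

/-- Generalized Skoda inequality (Lemma 1): for constants `a_i`, `b_{iα}` and a
skew-symmetric array `c_{i₁⋯i_ℓ α}` (skew in the first `ℓ = m + 1` indices), and
any fixed strictly increasing multi-index `i₁ < ⋯ < i_{ℓ-1}` (encoded by a
strictly monotone `w : Fin m → Fin p`), the stated estimate holds with
`q = min (p-1) n` if `ℓ = 1` and `q = min (p-ℓ+1) n` if `ℓ ≥ 2`. -/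
theorem generalized_skoda_inequality (p n m : ℕ) (hpm : m + 1 ≤ p)
    (a : Fin p → ℂ) (b : Fin p → Fin n → ℂ)
    (c : (Fin (m + 1) → Fin p) → Fin n → ℂ)
    (hskew : ∀ (v : Fin (m + 1) → Fin p) (s t : Fin (m + 1)) (α : Fin n), s ≠ t →
      c (v ∘ Equiv.swap s t) α = - c v α)
    (w : Fin m → Fin p) (hw : StrictMono w) :
    ‖(∑ i : Fin p, ∑ j : Fin p, ∑ α : Fin n,
        (starRingEnd ℂ) (a j) * (a j * b i α - a i * b j α) * c (Fin.cons i w) α)‖ ^ 2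
      ≤ ((if m = 0 then min (p - 1) n else min (p - m) n : ℕ) : ℝ) *
          (∑ i : Fin p, ‖a i‖ ^ 2) *
          ∑ i : Fin p, ∑ j : Fin p, ∑ k : Fin p,
            (if j < k then
              ‖(∑ α : Fin n,
                (a j * b k α - a k * b j α) * c (Fin.cons i w) α)‖ ^ 2
            else 0) :=
  generalized_skoda_inequality_general p n m a b c hskew w hw
end

section
/- Let $H, H_0, H_1$ be Hilbert spaces, $T : H_0 \to H$ a bounded linear operator, $T_1 : H_0 \to H_1$ a closed densely defined linear operator, and $F \subseteq H$ a closed subspace with $T(\ker T_1) \subseteq F$. Suppose $f \in F$ and $C > 0$ are such that $|\langle f, h\rangle_H| \le C\,\|T^* h + T_1^* v\|_{H_0}$ for all $h \in F$ and all $v \in \mathrm{Dom}(T_1^*)$. Then there exists $u \in \ker T_1$ with $Tu = f$ and $\|u\|_{H_0} \le C$. -/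
open scoped InnerProductSpace

/-!
The estimate says that `T* h + T₁* v ↦ ⟪f, h⟫` is a well-defined functional of norm at most `C`
on the range of `(h, v) ↦ T* h + T₁* v`. Extending it by Hahn–Banach and representing it by Riesz
gives `u` with `‖u‖ ≤ C` and `⟪u, T* h + T₁* v⟫ = ⟪f, h⟫`. Taking `h = 0` shows
`u ⊥ range T₁*`; since `T₁` is closed its graph is the orthogonal complement of the (rotated)
graph of `T₁*`, so `u ∈ ker T₁`. Taking `v = 0` shows `T u - f ⊥ F`, while `T u - f ∈ F`.
-/

section Extension

variable {𝕜 E M : Type*} [RCLike 𝕜] [AddCommGroup M] [Module 𝕜 M]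
  [NormedAddCommGroup E]

theorem LinearMap.exists_strongDual_range_of_norm_le_mul_norm [NormedSpace 𝕜 E] (S : M →ₗ[𝕜] E)
    (ψ : M →ₗ[𝕜] 𝕜) {C : ℝ} (hC : 0 ≤ C) (hψ : ∀ p, ‖ψ p‖ ≤ C * ‖S p‖) :
    ∃ φ : StrongDual 𝕜 (LinearMap.range S), ‖φ‖ ≤ C ∧
      ∀ p, φ ⟨S p, LinearMap.mem_range_self S p⟩ = ψ p := by
  have hker : LinearMap.ker S ≤ LinearMap.ker ψ := fun p hp => by
    simpa [LinearMap.mem_ker.mp hp] using hψ p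
  set φ : LinearMap.range S →ₗ[𝕜] 𝕜 :=
    (LinearMap.ker S).liftQ ψ hker ∘ₗ (LinearMap.quotKerEquivRange S).symm.toLinearMap
  have hφ : ∀ p, φ ⟨S p, LinearMap.mem_range_self S p⟩ = ψ p := fun p => by
    simp [φ, LinearMap.quotKerEquivRange_symm_apply_image]
  have hbound : ∀ y, ‖φ y‖ ≤ C * ‖y‖ := by
    rintro ⟨_, p, rfl⟩
    simpa [hφ] using hψ p
  exact ⟨φ.mkContinuous C hbound, LinearMap.mkContinuous_norm_le φ hC hbound, hφ⟩

theorem exists_inner_eq_of_norm_le_mul_norm [InnerProductSpace 𝕜 E] [CompleteSpace E]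
    (S : M →ₗ[𝕜] E) (ψ : M →ₗ[𝕜] 𝕜) {C : ℝ} (hC : 0 ≤ C) (hψ : ∀ p, ‖ψ p‖ ≤ C * ‖S p‖) :
    ∃ u : E, ‖u‖ ≤ C ∧ ∀ p, ⟪u, S p⟫_𝕜 = ψ p := by
  obtain ⟨φ, hφC, hφ⟩ := S.exists_strongDual_range_of_norm_le_mul_norm ψ hC hψ
  obtain ⟨g, hg, hgφ⟩ := exists_extension_norm_eq (LinearMap.range S) φ
  refine ⟨(InnerProductSpace.toDual 𝕜 E).symm g, by simpa [hgφ] using hφC, fun p => ?_⟩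
  rw [InnerProductSpace.toDual_symm_apply, ← hφ p, ← hg]

end Extension

namespace LinearPMap

variable {𝕜 E F : Type*} [RCLike 𝕜]
  [NormedAddCommGroup E] [InnerProductSpace 𝕜 E] [CompleteSpace E]
  [NormedAddCommGroup F] [InnerProductSpace 𝕜 F]
  {T : E →ₗ.[𝕜] F}

theorem skew_mem_graph_adjoint_of_inner_graph_eq_zero (hT : Dense (T.domain : Set E))
    {w : WithLp 2 (E × F)}
    (hw : ∀ x : T.domain, ⟪w, WithLp.toLp 2 ((x : E), T x)⟫_𝕜 = 0) :
    (w.snd, -w.fst) ∈ T†.graph := by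
  rw [adjoint_graph_eq_graph_adjoint hT, Submodule.mem_adjoint_iff]
  rintro a b hab
  obtain ⟨x, rfl, rfl⟩ := T.mem_graph_iff.mp hab
  have h := congrArg (starRingEnd 𝕜) (hw x)
  rw [WithLp.prod_inner_apply] at h
  simpa [add_comm] using h

theorem mem_graph_of_inner_adjoint_eq [CompleteSpace F] (hT : Dense (T.domain : Set E))
    (hcl : T.IsClosed) (x : E × F)
    (hx : ∀ v : T†.domain, ⟪T† v, x.1⟫_𝕜 = ⟪(v : F), x.2⟫_𝕜) : x ∈ T.graph := by
  set G : Submodule 𝕜 (WithLp 2 (E × F)) :=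
    T.graph.comap (WithLp.linearEquiv 2 𝕜 (E × F)).toLinearMap
  have hG : _root_.IsClosed (G : Set (WithLp 2 (E × F))) :=
    hcl.preimage (WithLp.prod_continuous_ofLp 2 E F)
  suffices WithLp.toLp 2 x ∈ Gᗮᗮ by
    rwa [Submodule.orthogonal_orthogonal_eq_closure, hG.submodule_topologicalClosure_eq] at this
  rw [Submodule.mem_orthogonal]
  intro w hw
  have hgraph : ∀ y : T.domain, ⟪w, WithLp.toLp 2 ((y : E), T y)⟫_𝕜 = 0 := fun y =>
    Submodule.inner_left_of_mem_orthogonal (T.mem_graph y) hw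
  obtain ⟨v, hv : (v : F) = w.snd, hTv : T† v = -w.fst⟩ :=
    T†.mem_graph_iff.mp (skew_mem_graph_adjoint_of_inner_graph_eq_zero hT hgraph)
  have hfst : w.fst = -T† v := by rw [hTv, neg_neg]
  change ⟪w.fst, x.1⟫_𝕜 + ⟪w.snd, x.2⟫_𝕜 = 0
  rw [hfst, ← hv, inner_neg_left, hx v, neg_add_cancel]

end LinearPMap

theorem skoda_fundamental_lemma_general
    {H H₀ H₁ : Type*}
    [NormedAddCommGroup H] [InnerProductSpace ℂ H] [CompleteSpace H]
    [NormedAddCommGroup H₀] [InnerProductSpace ℂ H₀] [CompleteSpace H₀]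
    [NormedAddCommGroup H₁] [InnerProductSpace ℂ H₁] [CompleteSpace H₁]
    (T : H₀ →L[ℂ] H) (T₁ : H₀ →ₗ.[ℂ] H₁)
    (hdense : Dense (T₁.domain : Set H₀)) (hclosed : T₁.IsClosed)
    (F : Submodule ℂ H)
    (hTF : ∀ u : T₁.domain, T₁ u = 0 → T u ∈ F)
    (f : H) (hf : f ∈ F) (C : ℝ) (hC : 0 < C)
    (hest : ∀ h ∈ F, ∀ v : T₁.adjoint.domain,
      ‖(⟪f, h⟫_ℂ : ℂ)‖ ≤ C * ‖ContinuousLinearMap.adjoint T h + T₁.adjoint v‖) :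
    ∃ u : T₁.domain, T₁ u = 0 ∧ T u = f ∧ ‖(u : H₀)‖ ≤ C := by
  set S : F × T₁.adjoint.domain →ₗ[ℂ] H₀ :=
    ((ContinuousLinearMap.adjoint T).toLinearMap ∘ₗ F.subtype).coprod T₁.adjoint.toFun
  set ψ : F × T₁.adjoint.domain →ₗ[ℂ] ℂ := innerₛₗ ℂ f ∘ₗ F.subtype ∘ₗ LinearMap.fst ℂ F _
  obtain ⟨u, hu, huS⟩ :=
    exists_inner_eq_of_norm_le_mul_norm S ψ hC.le fun p => hest p.1 p.1.2 p.2
  have hker : ∀ v : T₁.adjoint.domain, ⟪T₁.adjoint v, u⟫_ℂ = ⟪(v : H₁), 0⟫_ℂ := fun v => by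
    rw [inner_zero_right, inner_eq_zero_symm]
    simpa [S, ψ] using huS (0, v)
  obtain ⟨x, rfl, hx⟩ :=
    T₁.mem_graph_iff.mp (T₁.mem_graph_of_inner_adjoint_eq hdense hclosed (u, 0) hker)
  refine ⟨x, hx, ?_, hu⟩
  have hperp : ∀ h ∈ F, ⟪T x - f, h⟫_ℂ = 0 := fun h hh => by
    have hTh : ⟪T x, h⟫_ℂ = ⟪f, h⟫_ℂ := by
      rw [← ContinuousLinearMap.adjoint_inner_right]
      simpa [S, ψ] using huS (⟨h, hh⟩, 0)
    rw [inner_sub_left, hTh, sub_self]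
  exact sub_eq_zero.mp (inner_self_eq_zero.mp (hperp _ (F.sub_mem (hTF x hx) hf)))

/-- Skoda's fundamental functional-analysis lemma (one direction of Lemma 4):
if `T : H₀ → H` is bounded, `T₁ : H₀ →ₗ. H₁` is closed and densely defined,
`F ⊆ H` is a closed subspace with `T (ker T₁) ⊆ F`, `f ∈ F`, and
`|⟪f, h⟫| ≤ C ‖T* h + T₁* v‖` for all `h ∈ F` and `v ∈ Dom T₁*`, then there is
`u ∈ ker T₁` with `T u = f` and `‖u‖ ≤ C`. -/
theorem skoda_fundamental_lemma
    {H H₀ H₁ : Type*}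
    [NormedAddCommGroup H] [InnerProductSpace ℂ H] [CompleteSpace H]
    [NormedAddCommGroup H₀] [InnerProductSpace ℂ H₀] [CompleteSpace H₀]
    [NormedAddCommGroup H₁] [InnerProductSpace ℂ H₁] [CompleteSpace H₁]
    (T : H₀ →L[ℂ] H) (T₁ : H₀ →ₗ.[ℂ] H₁)
    (hdense : Dense (T₁.domain : Set H₀)) (hclosed : T₁.IsClosed)
    (F : Submodule ℂ H) (hF : IsClosed (F : Set H))
    (hTF : ∀ u : T₁.domain, T₁ u = 0 → T u ∈ F)
    (f : H) (hf : f ∈ F) (C : ℝ) (hC : 0 < C)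
    (hest : ∀ h ∈ F, ∀ v : T₁.adjoint.domain,
      ‖(⟪f, h⟫_ℂ : ℂ)‖ ≤ C * ‖ContinuousLinearMap.adjoint T h + T₁.adjoint v‖) :
    ∃ u : T₁.domain, T₁ u = 0 ∧ T u = f ∧ ‖(u : H₀)‖ ≤ C :=
  skoda_fundamental_lemma_general T T₁ hdense hclosed F hTF f hf C hC hest
end

section
/- For complex numbers $a_1,\dots,a_p$ and all $b \in \mathbb{C}^{p\times n}$, $c \in \mathbb{C}^{p \times n}$, $\big|\sum_{i,j,\alpha} \bar a_j (a_j b_{i\alpha} - a_i b_{j\alpha}) c_{i\alpha}\big|^2 \le \min\{p-1,n\}\,\big(\sum_i |a_i|^2\big) \sum_{j<k}\sum_i \big|\sum_\alpha (a_j b_{k\alpha} - a_k b_{j\alpha}) c_{i\alpha}\big|^2$. -/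
open Complex Finset

local notation "⟪" x ", " y "⟫" => @inner ℂ _ _ x y

section helpers

lemma abs_sum_mul_sq_le {ι : Type*} (s : Finset ι) (x y : ι → ℂ) :
    ‖∑ i ∈ s, x i * y i‖ ^ 2
      ≤ (∑ i ∈ s, ‖x i‖ ^ 2) * (∑ i ∈ s, ‖y i‖ ^ 2) := by
  calc ‖∑ i ∈ s, x i * y i‖ ^ 2
      ≤ (∑ i ∈ s, ‖x i‖ * ‖y i‖) ^ 2 := by
        gcongr
        exact (norm_sum_le _ _).trans (le_of_eq (by simp [map_mul]))
    _ ≤ _ := Finset.sum_mul_sq_le_sq_mul_sq s _ _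

lemma key {p : ℕ} (ρ : Fin p → EuclideanSpace ℂ (Fin p))
    (V : Submodule ℂ (EuclideanSpace ℂ (Fin p))) (hρ : ∀ i, ρ i ∈ V) :
    ‖∑ i, ρ i i‖ ^ 2
      ≤ (Module.finrank ℂ V : ℝ) * ∑ i, ‖ρ i‖ ^ 2 := by
  classical
  set d := Module.finrank ℂ V with hd
  let f : OrthonormalBasis (Fin d) ℂ V := stdOrthonormalBasis ℂ V
  let g : Fin d → EuclideanSpace ℂ (Fin p) := fun s => (f s : EuclideanSpace ℂ (Fin p))
  have hg_norm : ∀ s, ∑ i, ‖g s i‖ ^ 2 = 1 := by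
    intro s
    have h1 : ‖g s‖ = 1 := by
      exact f.orthonormal.1 s
    have := EuclideanSpace.norm_eq (g s)
    rw [h1] at this
    have h2 : (1:ℝ) = ∑ i, ‖g s i‖ ^ 2 := by
      have := congrArg (· ^ 2) this
      simpa [Real.sq_sqrt (Finset.sum_nonneg fun i _ => sq_nonneg _)] using this
    simpa using h2.symm
  have hdecomp : ∀ i, ρ i = ∑ s, ⟪g s, ρ i⟫ • g s := by
    intro i
    have h := f.sum_repr' (⟨ρ i, hρ i⟩ : V)
    have := congrArg (Submodule.subtype V) h
    simpa [Submodule.coe_sum, Submodule.coe_inner, g] using this.symm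
  have hpars : ∀ i, ∑ s, ‖⟪g s, ρ i⟫‖ ^ 2 = ‖ρ i‖ ^ 2 := by
    intro i
    have h := f.repr.norm_map (⟨ρ i, hρ i⟩ : V)
    have h2 : ‖f.repr ⟨ρ i, hρ i⟩‖ ^ 2 = ‖ρ i‖ ^ 2 := by
      rw [h]; rfl
    rw [← h2]
    rw [EuclideanSpace.norm_eq]
    rw [Real.sq_sqrt (Finset.sum_nonneg fun i _ => sq_nonneg _)]
    refine Finset.sum_congr rfl fun s _ => ?_
    rw [f.repr_apply_apply]
    simp [Submodule.coe_inner, g]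
  have hev : (∑ i, ρ i i) = ∑ s, ∑ i, g s i * ⟪g s, ρ i⟫ := by
    rw [Finset.sum_comm]
    refine Finset.sum_congr rfl fun i _ => ?_
    conv_lhs => rw [hdecomp i]
    rw [WithLp.ofLp_sum, Finset.sum_apply]
    refine Finset.sum_congr rfl fun s _ => ?_
    simp [mul_comm]
  calc ‖∑ i, ρ i i‖ ^ 2
      = ‖∑ s, ∑ i, g s i * ⟪g s, ρ i⟫‖ ^ 2 := by rw [hev]
    _ ≤ (∑ s : Fin d, ‖∑ i, g s i * ⟪g s, ρ i⟫‖) ^ 2 := by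
        gcongr
        exact norm_sum_le _ _
    _ ≤ (d : ℝ) * ∑ s : Fin d, ‖∑ i, g s i * ⟪g s, ρ i⟫‖ ^ 2 := by
        simpa using sq_sum_le_card_mul_sum_sq (s := (Finset.univ : Finset (Fin d)))
          (f := fun s => ‖∑ i, g s i * ⟪g s, ρ i⟫‖)
    _ ≤ (d : ℝ) * ∑ s : Fin d, (∑ i, ‖g s i‖ ^ 2) *
          (∑ i, ‖⟪g s, ρ i⟫‖ ^ 2) := by
        have hle : ∀ s : Fin d, ‖∑ i, g s i * ⟪g s, ρ i⟫‖ ^ 2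
            ≤ (∑ i, ‖g s i‖ ^ 2) * (∑ i, ‖⟪g s, ρ i⟫‖ ^ 2) :=
          fun s => abs_sum_mul_sq_le _ _ _
        exact mul_le_mul_of_nonneg_left (Finset.sum_le_sum fun s _ => hle s)
          (Nat.cast_nonneg _)
    _ = (d : ℝ) * ∑ i, ‖ρ i‖ ^ 2 := by
        rw [Finset.sum_congr rfl fun s _ => by rw [hg_norm s, one_mul], Finset.sum_comm]
        rw [Finset.sum_congr rfl fun i (_ : i ∈ Finset.univ) => hpars i]

end helpers

/-- Skoda's original inequality (the case `ℓ = 1` of Lemma 1): for all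
`a ∈ ℂᵖ` and `b, c ∈ ℂ^{p×n}`,
`|∑_{i,j,α} ā_j (a_j b_{iα} - a_i b_{jα}) c_{iα}|²
  ≤ min(p-1, n) (∑ |a_i|²) ∑_{j<k} ∑_i |∑_α (a_j b_{kα} - a_k b_{jα}) c_{iα}|²`. -/
theorem skoda_inequality (p n : ℕ) (a : Fin p → ℂ)
    (b : Fin p → Fin n → ℂ) (c : Fin p → Fin n → ℂ) :
    ‖∑ i : Fin p, ∑ j : Fin p, ∑ α : Fin n,
        (starRingEnd ℂ) (a j) * (a j * b i α - a i * b j α) * c i α‖ ^ 2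
      ≤ ((min (p - 1) n : ℕ) : ℝ) * (∑ i : Fin p, ‖a i‖ ^ 2) *
          ∑ j : Fin p, ∑ k : Fin p,
            (if j < k then
              ∑ i : Fin p, ‖∑ α : Fin n,
                (a j * b k α - a k * b j α) * c i α‖ ^ 2
            else 0) := by
  classical
  set A : ℝ := ∑ i : Fin p, ‖a i‖ ^ 2 with hAdef
  have hA0 : 0 ≤ A := Finset.sum_nonneg fun i _ => sq_nonneg _
  rcases eq_or_lt_of_le hA0 with hA | hA
  · -- A = 0, hence a = 0, LHS = 0
    have ha : ∀ i, a i = 0 := by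
      intro i
      have := (Finset.sum_eq_zero_iff_of_nonneg (fun i _ => sq_nonneg (‖a i‖))).1
        hA.symm i (Finset.mem_univ i)
      have := pow_eq_zero_iff (n := 2) (by norm_num) |>.1 this
      simpa using this
    have hL : (∑ i : Fin p, ∑ j : Fin p, ∑ α : Fin n,
        (starRingEnd ℂ) (a j) * (a j * b i α - a i * b j α) * c i α) = 0 := by
      refine Finset.sum_eq_zero fun i _ => Finset.sum_eq_zero fun j _ =>
        Finset.sum_eq_zero fun α _ => ?_
      simp [ha]
    rw [hL]
    simp only [norm_zero]
    have : (0:ℝ) ^ 2 = 0 := by norm_num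
    rw [this]
    apply mul_nonneg (mul_nonneg (Nat.cast_nonneg _) hA0)
    refine Finset.sum_nonneg fun j _ => Finset.sum_nonneg fun k _ => ?_
    split_ifs
    · exact Finset.sum_nonneg fun i _ => sq_nonneg _
    · exact le_rfl
  · -- main case: A > 0
    have hAne : (A:ℂ) ≠ 0 := by
      exact_mod_cast ne_of_gt hA
    have hAc : ∑ j : Fin p, (starRingEnd ℂ) (a j) * a j = (A:ℂ) := by
      rw [hAdef]
      push_cast
      refine Finset.sum_congr rfl fun j _ => ?_
      rw [← Complex.normSq_eq_conj_mul_self]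
      norm_cast
      exact (Complex.sq_norm _).symm
    set G : Fin n → ℂ := fun α => ∑ j : Fin p, (starRingEnd ℂ) (a j) * b j α with hGdef
    set β : Fin n → EuclideanSpace ℂ (Fin p) :=
      fun α => WithLp.toLp 2 (fun k => b k α - G α * a k / (A:ℂ)) with hβdef
    have hβ_apply : ∀ α k, β α k = b k α - G α * a k / (A:ℂ) := fun α k => rfl
    have hab : ∀ j k α, a j * b k α - a k * b j α = a j * β α k - a k * β α j := by
      intro j k α
      rw [hβ_apply, hβ_apply]
      field_simp
      ring
    have hperp : ∀ α, ∑ k : Fin p, (starRingEnd ℂ) (a k) * β α k = 0 := by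
      intro α
      have : ∑ k : Fin p, (starRingEnd ℂ) (a k) * β α k
          = (∑ k : Fin p, (starRingEnd ℂ) (a k) * b k α)
            - (∑ k : Fin p, (starRingEnd ℂ) (a k) * a k) * (G α / (A:ℂ)) := by
        rw [Finset.sum_mul, ← Finset.sum_sub_distrib]
        refine Finset.sum_congr rfl fun k _ => ?_
        rw [hβ_apply]
        ring
      have hGα : (∑ k : Fin p, (starRingEnd ℂ) (a k) * b k α) = G α := rfl
      rw [this, hAc, hGα]
      field_simp
      ring
    set ρ : Fin p → EuclideanSpace ℂ (Fin p) :=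
      fun i => WithLp.toLp 2 (fun k => ∑ α : Fin n, c i α * β α k) with hρdef
    have hρ_apply : ∀ i k, ρ i k = ∑ α : Fin n, c i α * β α k := fun i k => rfl
    have hperp2 : ∀ i, ∑ k : Fin p, (starRingEnd ℂ) (a k) * ρ i k = 0 := by
      intro i
      calc ∑ k : Fin p, (starRingEnd ℂ) (a k) * ρ i k
          = ∑ k : Fin p, ∑ α : Fin n, c i α * ((starRingEnd ℂ) (a k) * β α k) := by
            refine Finset.sum_congr rfl fun k _ => ?_
            rw [hρ_apply, Finset.mul_sum]
            exact Finset.sum_congr rfl fun α _ => by ring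
        _ = ∑ α : Fin n, ∑ k : Fin p, c i α * ((starRingEnd ℂ) (a k) * β α k) :=
            Finset.sum_comm
        _ = ∑ α : Fin n, c i α * ∑ k : Fin p, (starRingEnd ℂ) (a k) * β α k := by
            refine Finset.sum_congr rfl fun α _ => (Finset.mul_sum _ _ _).symm
        _ = 0 := by simp [hperp]
    -- the span of the β's
    set V : Submodule ℂ (EuclideanSpace ℂ (Fin p)) :=
      Submodule.span ℂ (Set.range β) with hVdef
    have hρmem : ∀ i, ρ i ∈ V := by
      intro i
      have : ρ i = ∑ α : Fin n, c i α • β α := by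
        ext k
        rw [hρ_apply]
        rw [WithLp.ofLp_sum, Finset.sum_apply]
        rfl
      rw [this]
      exact Submodule.sum_mem _ fun α _ =>
        Submodule.smul_mem _ _ (Submodule.subset_span (Set.mem_range_self α))
    have hdim : Module.finrank ℂ V ≤ min (p - 1) n := by
      refine le_min ?_ ?_
      · -- each β α is orthogonal to a
        have hane : (EuclideanSpace.equiv (Fin p) ℂ).symm a ≠ 0 := by
          intro h
          apply hAne
          rw [← hAc]
          have : ∀ k, a k = 0 := by
            intro k
            have := congrFun (congrArg (EuclideanSpace.equiv (Fin p) ℂ) h) k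
            simpa using this
          simp [this]
        set av : EuclideanSpace ℂ (Fin p) := (EuclideanSpace.equiv (Fin p) ℂ).symm a
          with havdef
        have hav_apply : ∀ k, av k = a k := fun k => rfl
        set K : Submodule ℂ (EuclideanSpace ℂ (Fin p)) := Submodule.span ℂ {av}
        have hVK : V ≤ Kᗮ := by
          rw [hVdef, Submodule.span_le]
          rintro x ⟨α, rfl⟩
          rw [SetLike.mem_coe, Submodule.mem_orthogonal]
          intro u hu
          rw [Submodule.mem_span_singleton] at hu
          obtain ⟨z, rfl⟩ := hu
          rw [inner_smul_left]
          have : ⟪av, β α⟫ = 0 := by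
            rw [PiLp.inner_apply]
            simpa [hav_apply, mul_comm] using hperp α
          rw [this, mul_zero]
        have hK : Module.finrank ℂ K = 1 := finrank_span_singleton hane
        have hKorth : Module.finrank ℂ (Kᗮ) = p - 1 := by
          have := Submodule.finrank_add_finrank_orthogonal (K := K)
          rw [hK] at this
          have hp : Module.finrank ℂ (EuclideanSpace ℂ (Fin p)) = p := by
            simp [finrank_euclideanSpace]
          rw [hp] at this
          omega
        calc Module.finrank ℂ V ≤ Module.finrank ℂ (Kᗮ) := Submodule.finrank_mono hVK
          _ = p - 1 := hKorth
      · calc Module.finrank ℂ V ≤ Fintype.card (Fin n) := finrank_range_le_card β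
          _ = n := Fintype.card_fin n
    -- the key inequality
    have hkey : ‖∑ i, ρ i i‖ ^ 2
        ≤ ((min (p - 1) n : ℕ) : ℝ) * ∑ i, ‖ρ i‖ ^ 2 := by
      refine (key ρ V hρmem).trans ?_
      have : (0:ℝ) ≤ ∑ i, ‖ρ i‖ ^ 2 := Finset.sum_nonneg fun i _ => sq_nonneg _
      exact mul_le_mul_of_nonneg_right (by exact_mod_cast hdim) this
    -- identify the LHS
    have hS : (∑ i : Fin p, ∑ j : Fin p, ∑ α : Fin n,
          (starRingEnd ℂ) (a j) * (a j * b i α - a i * b j α) * c i α)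
        = (A:ℂ) * ∑ i, ρ i i := by
      have h1 : ∀ (i : Fin p) (α : Fin n),
          (∑ j : Fin p, (starRingEnd ℂ) (a j) * (a j * b i α - a i * b j α) * c i α)
            = (A:ℂ) * (β α i * c i α)
              - (∑ j : Fin p, (starRingEnd ℂ) (a j) * β α j) * (a i * c i α) := by
        intro i α
        rw [← hAc, Finset.sum_mul, Finset.sum_mul, ← Finset.sum_sub_distrib]
        refine Finset.sum_congr rfl fun j _ => ?_
        rw [hab j i α]
        ring
      calc (∑ i : Fin p, ∑ j : Fin p, ∑ α : Fin n,
            (starRingEnd ℂ) (a j) * (a j * b i α - a i * b j α) * c i α)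
          = ∑ i : Fin p, ∑ α : Fin n, ∑ j : Fin p,
              (starRingEnd ℂ) (a j) * (a j * b i α - a i * b j α) * c i α := by
            exact Finset.sum_congr rfl fun i _ => Finset.sum_comm
        _ = ∑ i : Fin p, ∑ α : Fin n, (A:ℂ) * (β α i * c i α) := by
            refine Finset.sum_congr rfl fun i _ => Finset.sum_congr rfl fun α _ => ?_
            rw [h1 i α, hperp α, zero_mul, sub_zero]
        _ = (A:ℂ) * ∑ i, ρ i i := by
            rw [Finset.mul_sum]
            refine Finset.sum_congr rfl fun i _ => ?_
            rw [← Finset.mul_sum, hρ_apply]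
            congr 1
            exact Finset.sum_congr rfl fun α _ => mul_comm _ _
    -- identify the RHS double sum
    have ht : ∀ (j k i : Fin p), (∑ α : Fin n, (a j * b k α - a k * b j α) * c i α)
        = a j * ρ i k - a k * ρ i j := by
      intro j k i
      calc (∑ α : Fin n, (a j * b k α - a k * b j α) * c i α)
          = ∑ α : Fin n, (a j * (c i α * β α k) - a k * (c i α * β α j)) := by
            refine Finset.sum_congr rfl fun α _ => ?_
            rw [hab j k α]
            ring
        _ = a j * ρ i k - a k * ρ i j := by
            rw [Finset.sum_sub_distrib, ← Finset.mul_sum, ← Finset.mul_sum,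
              hρ_apply, hρ_apply]
    -- the squared-norm sum
    set P : ℝ := ∑ i : Fin p, ∑ k : Fin p, ‖ρ i k‖ ^ 2 with hPdef
    have hPnorm : ∑ i, ‖ρ i‖ ^ 2 = P := by
      rw [hPdef]
      refine Finset.sum_congr rfl fun i _ => ?_
      rw [EuclideanSpace.norm_eq,
        Real.sq_sqrt (Finset.sum_nonneg fun k _ => sq_nonneg _)]
    set F : Fin p → Fin p → ℝ :=
      fun j k => ∑ i : Fin p, ‖a j * ρ i k - a k * ρ i j‖ ^ 2 with hFdef
    have hF_apply : ∀ j k, F j k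
        = ∑ i : Fin p, ‖a j * ρ i k - a k * ρ i j‖ ^ 2 := fun _ _ => rfl
    have hFsym : ∀ j k, F j k = F k j := by
      intro j k
      rw [hF_apply, hF_apply]
      refine Finset.sum_congr rfl fun i _ => ?_
      rw [norm_sub_rev]
    have hFdiag : ∀ j, F j j = 0 := by
      intro j
      rw [hF_apply]
      refine Finset.sum_eq_zero fun i _ => ?_
      rw [sub_self, norm_zero]
      norm_num
    -- the expansion of the full double sum
    have hexp : ∀ (j k i : Fin p), ‖a j * ρ i k - a k * ρ i j‖ ^ 2
        = ‖a j‖ ^ 2 * ‖ρ i k‖ ^ 2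
          + ‖a k‖ ^ 2 * ‖ρ i j‖ ^ 2
          - 2 * ((a j * ρ i k) * (starRingEnd ℂ) (a k * ρ i j)).re := by
      intro j k i
      rw [Complex.sq_norm, Complex.normSq_sub, Complex.sq_norm, Complex.sq_norm,
        Complex.normSq_mul, Complex.sq_norm, Complex.sq_norm, Complex.normSq_mul]
    have piece1 : (∑ j : Fin p, ∑ k : Fin p, ∑ i : Fin p,
        ‖a j‖ ^ 2 * ‖ρ i k‖ ^ 2) = A * P := by
      calc (∑ j : Fin p, ∑ k : Fin p, ∑ i : Fin p,
              ‖a j‖ ^ 2 * ‖ρ i k‖ ^ 2)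
          = ∑ j : Fin p, ‖a j‖ ^ 2
              * ∑ k : Fin p, ∑ i : Fin p, ‖ρ i k‖ ^ 2 := by
            refine Finset.sum_congr rfl fun j _ => ?_
            rw [Finset.mul_sum]
            exact Finset.sum_congr rfl fun k _ => (Finset.mul_sum _ _ _).symm
        _ = A * P := by
            rw [← Finset.sum_mul, ← hAdef]
            congr 1
            rw [hPdef]
            exact Finset.sum_comm
    have piece2 : (∑ j : Fin p, ∑ k : Fin p, ∑ i : Fin p,
        ‖a k‖ ^ 2 * ‖ρ i j‖ ^ 2) = A * P := by
      calc (∑ j : Fin p, ∑ k : Fin p, ∑ i : Fin p,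
              ‖a k‖ ^ 2 * ‖ρ i j‖ ^ 2)
          = ∑ j : Fin p, A * ∑ i : Fin p, ‖ρ i j‖ ^ 2 := by
            refine Finset.sum_congr rfl fun j _ => ?_
            rw [Finset.sum_congr rfl fun (k : Fin p) (_ : k ∈ Finset.univ) =>
              (Finset.mul_sum Finset.univ (fun i => ‖ρ i j‖ ^ 2)
                (‖a k‖ ^ 2)).symm]
            rw [← Finset.sum_mul, ← hAdef]
        _ = A * P := by
            rw [← Finset.mul_sum]
            congr 1
            rw [hPdef]
            exact Finset.sum_comm
    have piece3 : (∑ j : Fin p, ∑ k : Fin p, ∑ i : Fin p,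
        ((a j * ρ i k) * (starRingEnd ℂ) (a k * ρ i j)).re) = 0 := by
      have hz : (∑ j : Fin p, ∑ k : Fin p, ∑ i : Fin p,
          (a j * ρ i k) * (starRingEnd ℂ) (a k * ρ i j)) = 0 := by
        calc (∑ j : Fin p, ∑ k : Fin p, ∑ i : Fin p,
                (a j * ρ i k) * (starRingEnd ℂ) (a k * ρ i j))
            = ∑ j : Fin p, ∑ i : Fin p, ∑ k : Fin p,
                (a j * ρ i k) * (starRingEnd ℂ) (a k * ρ i j) := by
              exact Finset.sum_congr rfl fun j _ => Finset.sum_comm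
          _ = 0 := by
              refine Finset.sum_eq_zero fun j _ => Finset.sum_eq_zero fun i _ => ?_
              calc (∑ k : Fin p, (a j * ρ i k) * (starRingEnd ℂ) (a k * ρ i j))
                  = (a j * (starRingEnd ℂ) (ρ i j))
                      * ∑ k : Fin p, (starRingEnd ℂ) (a k) * ρ i k := by
                    rw [Finset.mul_sum]
                    refine Finset.sum_congr rfl fun k _ => ?_
                    rw [map_mul]
                    ring
                _ = 0 := by rw [hperp2 i, mul_zero]
      calc (∑ j : Fin p, ∑ k : Fin p, ∑ i : Fin p,
              ((a j * ρ i k) * (starRingEnd ℂ) (a k * ρ i j)).re)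
          = (∑ j : Fin p, ∑ k : Fin p, ∑ i : Fin p,
              (a j * ρ i k) * (starRingEnd ℂ) (a k * ρ i j)).re := by
            rw [Complex.re_sum]
            refine Finset.sum_congr rfl fun j _ => ?_
            rw [Complex.re_sum]
            refine Finset.sum_congr rfl fun k _ => ?_
            rw [Complex.re_sum]
        _ = 0 := by rw [hz, Complex.zero_re]
    have hbig : (∑ j : Fin p, ∑ k : Fin p, F j k) = 2 * (A * P) := by
      have : ∀ j k, F j k
          = (∑ i : Fin p, ‖a j‖ ^ 2 * ‖ρ i k‖ ^ 2)
            + (∑ i : Fin p, ‖a k‖ ^ 2 * ‖ρ i j‖ ^ 2)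
            - 2 * ∑ i : Fin p, ((a j * ρ i k) * (starRingEnd ℂ) (a k * ρ i j)).re := by
        intro j k
        rw [hF_apply, Finset.mul_sum, ← Finset.sum_add_distrib, ← Finset.sum_sub_distrib]
        exact Finset.sum_congr rfl fun i _ => hexp j k i
      calc (∑ j : Fin p, ∑ k : Fin p, F j k)
          = (∑ j : Fin p, ∑ k : Fin p, ∑ i : Fin p,
              ‖a j‖ ^ 2 * ‖ρ i k‖ ^ 2)
            + (∑ j : Fin p, ∑ k : Fin p, ∑ i : Fin p,
              ‖a k‖ ^ 2 * ‖ρ i j‖ ^ 2)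
            - 2 * (∑ j : Fin p, ∑ k : Fin p, ∑ i : Fin p,
              ((a j * ρ i k) * (starRingEnd ℂ) (a k * ρ i j)).re) := by
            simp only [this, Finset.sum_add_distrib, Finset.sum_sub_distrib,
              Finset.mul_sum]
        _ = 2 * (A * P) := by rw [piece1, piece2, piece3]; ring
    -- halving
    set D : ℝ := ∑ j : Fin p, ∑ k : Fin p, (if j < k then F j k else 0) with hDdef
    have h2D : D + D = ∑ j : Fin p, ∑ k : Fin p, F j k := by
      have hswap : (∑ j : Fin p, ∑ k : Fin p, (if j < k then F j k else 0))
          = ∑ j : Fin p, ∑ k : Fin p, (if k < j then F j k else 0) := by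
        rw [Finset.sum_comm]
        exact Finset.sum_congr rfl fun j _ => Finset.sum_congr rfl fun k _ => by
          rw [hFsym j k]
      rw [hDdef]
      nth_rewrite 2 [hswap]
      rw [← Finset.sum_add_distrib]
      refine Finset.sum_congr rfl fun j _ => ?_
      rw [← Finset.sum_add_distrib]
      refine Finset.sum_congr rfl fun k _ => ?_
      rcases lt_trichotomy j k with h | h | h
      · rw [if_pos h, if_neg (asymm h), add_zero]
      · subst h
        simp [hFdiag j]
      · rw [if_neg (asymm h), if_pos h, zero_add]
    have hDval : D = A * P := by
      have := h2D
      rw [hbig] at this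
      linarith
    -- identify goal's RHS sum with D
    have hDeq : (∑ j : Fin p, ∑ k : Fin p,
        (if j < k then
          ∑ i : Fin p, ‖∑ α : Fin n,
            (a j * b k α - a k * b j α) * c i α‖ ^ 2
        else 0)) = D := by
      rw [hDdef]
      refine Finset.sum_congr rfl fun j _ => Finset.sum_congr rfl fun k _ => ?_
      split_ifs with h
      · rw [hF_apply]
        refine Finset.sum_congr rfl fun i _ => ?_
        rw [ht j k i]
      · rfl
    -- finish
    rw [hS, hDeq, hDval]
    have habsA : ‖(A:ℂ)‖ = A := by
      rw [Complex.norm_of_nonneg hA0]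
    rw [norm_mul, habsA, mul_pow]
    calc A ^ 2 * ‖∑ i, ρ i i‖ ^ 2
        ≤ A ^ 2 * (((min (p - 1) n : ℕ) : ℝ) * ∑ i, ‖ρ i‖ ^ 2) :=
          mul_le_mul_of_nonneg_left hkey (sq_nonneg _)
      _ = ((min (p - 1) n : ℕ) : ℝ) * A * (A * P) := by rw [hPnorm]; ring
end
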